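/- arXiv:0706.2720 — 2 statements merged into one kernel-verified Lean document; each statement's English description precedes it below -/
import Mathlib

section
/- Let ξ₁, ξ₂, … be i.i.d. standard Gaussian random variables. There exist constants c̃₃, c̃₄ > 0 such that for all L > 0 and all integers N with L/2 ≤ N ≤ 2L, c̃₃·L ≤ −log E[exp(−L·max_{1≤i≤N} |ξᵢ|)] ≤ c̃₄·L. -/
/-!
Since `N ≤ 2L`, the maximum dominates the average: `L · maxᵢ |ξᵢ| ≥ ½ ∑ᵢ |ξᵢ|`, so by
independence the expectation is at most `q ^ N` with `q = E[exp(-|ξ|/2)] < 1`, whence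
`-log E ≥ N (-log q) ≥ (L/2)(-log q)`. Conversely, on the event `{|ξᵢ| ≤ 1 for all i}`, of
probability `p ^ N` with `p = P(|ξ| ≤ 1) > 0`, the integrand is at least `exp(-L)`, whence
`-log E ≤ L - N log p ≤ (1 - 2 log p) L`.
-/

open MeasureTheory ProbabilityTheory Real NNReal

lemma integrable_exp_neg_mul_abs {μ : Measure ℝ} [IsFiniteMeasure μ] {c : ℝ} (hc : 0 ≤ c) :
    Integrable (fun x => exp (-(c * |x|))) μ :=
  .of_bound (by fun_prop) 1 <| .of_forall fun x => by
    rw [norm_of_nonneg (exp_pos _).le, exp_le_one_iff, neg_nonpos]; positivity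

lemma integral_exp_neg_mul_abs_lt_one {μ : Measure ℝ} [IsProbabilityMeasure μ] (hμ : μ {0}ᶜ ≠ 0)
    {c : ℝ} (hc : 0 < c) : ∫ x, exp (-(c * |x|)) ∂μ < 1 := by
  have hsupp : Function.support (fun x : ℝ => 1 - exp (-(c * |x|))) = {0}ᶜ := by
    ext x
    simp [sub_eq_zero, eq_comm (a := (1:ℝ)), hc.ne']
  have hpos : 0 < ∫ x, (1 - exp (-(c * |x|))) ∂μ := by
    rw [integral_pos_iff_support_of_nonneg (f := fun x : ℝ => 1 - exp (-(c * |x|))) _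
      ((integrable_const 1).sub (integrable_exp_neg_mul_abs hc.le)), hsupp]
    · exact pos_iff_ne_zero.2 hμ
    · intro x
      simp only [Pi.zero_apply, sub_nonneg, exp_le_one_iff, neg_nonpos]
      positivity
  rw [integral_sub (integrable_const 1) (integrable_exp_neg_mul_abs hc.le)] at hpos
  simpa using hpos

lemma gaussianReal_compl_singleton_ne_zero {m : ℝ} {v : ℝ≥0} (hv : v ≠ 0) (x : ℝ) :
    gaussianReal m v {x}ᶜ ≠ 0 := by
  have := nullSingletonClass_gaussianReal (μ := m) hv
  simp [measure_compl]

lemma measureReal_gaussianReal_Icc_pos {m : ℝ} {v : ℝ≥0} (hv : v ≠ 0) {a b : ℝ} (hab : a < b) :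
    0 < (gaussianReal m v).real (Set.Icc a b) := by
  refine ENNReal.toReal_pos (fun h => ?_) (measure_ne_top _ _)
  have := gaussianReal_absolutelyContinuous' m hv h
  simp only [Real.volume_Icc, ENNReal.ofReal_eq_zero, tsub_le_iff_right, zero_add] at this
  linarith

lemma aemeasurable_of_map_eq {α β : Type*} [MeasurableSpace α] [MeasurableSpace β] {P : Measure α}
    {μ : Measure β} [NeZero μ] {X : α → β} (h : P.map X = μ) : AEMeasurable X P :=
  aemeasurable_of_map_neZero (h ▸ inferInstance)

namespace ProbabilityTheory

variable {Ω ι 𝓧 : Type*} [MeasurableSpace Ω] [MeasurableSpace 𝓧] [Fintype ι] {P : Measure Ω}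
  {μ : Measure 𝓧} [NeZero μ] {ξ : ι → Ω → 𝓧}

lemma iIndepFun.integral_fun_prod_comp_of_map_eq (hξ : iIndepFun ξ P)
    (hmap : ∀ i, P.map (ξ i) = μ) {f : 𝓧 → ℝ} (hf : AEStronglyMeasurable f μ) :
    ∫ ω, ∏ i, f (ξ i ω) ∂P = (∫ x, f x ∂μ) ^ Fintype.card ι := by
  rw [hξ.integral_fun_prod_comp (fun i => aemeasurable_of_map_eq (hmap i)) (fun i => hmap i ▸ hf)]
  simp_rw [← integral_map (aemeasurable_of_map_eq (hmap _)) ((hmap _).symm ▸ hf), hmap]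
  simp

lemma iIndepFun.measure_iInter_preimage_of_map_eq (hξ : iIndepFun ξ P)
    (hmap : ∀ i, P.map (ξ i) = μ) {B : Set 𝓧} (hB : MeasurableSet B) :
    P (⋂ i, ξ i ⁻¹' B) = μ B ^ Fintype.card ι := by
  rw [hξ.meas_iInter fun i => ⟨B, hB, rfl⟩]
  have hi (i : ι) : P (ξ i ⁻¹' B) = μ B := by
    rw [← Measure.map_apply₀ (aemeasurable_of_map_eq (hmap i)) hB.nullMeasurableSet, hmap]
  simp [hi]

end ProbabilityTheory

section MaxAbs

variable {ι : Type*} [Fintype ι]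

lemma sum_abs_le_card_mul_iSup_abs (x : ι → ℝ) : ∑ i, |x i| ≤ Fintype.card ι * ⨆ i, |x i| := by
  simpa using Finset.sum_le_card_nsmul Finset.univ (fun i => |x i|) _
    fun i _ => le_ciSup (f := fun i => |x i|) (Set.finite_range _).bddAbove i

lemma exp_neg_mul_iSup_abs_le_prod {c L : ℝ} (hc : 0 ≤ c) (hcL : Fintype.card ι * c ≤ L)
    (x : ι → ℝ) : exp (-(L * ⨆ i, |x i|)) ≤ ∏ i, exp (-(c * |x i|)) := by
  have hS : 0 ≤ ⨆ i, |x i| := Real.iSup_nonneg fun i => abs_nonneg _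
  rw [← exp_sum, exp_le_exp, Finset.sum_neg_distrib, neg_le_neg_iff, ← Finset.mul_sum]
  calc c * ∑ i, |x i| ≤ c * (Fintype.card ι * ⨆ i, |x i|) := by
        gcongr; exact sum_abs_le_card_mul_iSup_abs x
    _ = (Fintype.card ι * c) * ⨆ i, |x i| := by ring
    _ ≤ L * ⨆ i, |x i| := by gcongr

end MaxAbs

section ExpMaxAbs

variable {Ω ι : Type*} [MeasurableSpace Ω] [Fintype ι] {P : Measure Ω} [IsProbabilityMeasure P]
  {μ : Measure ℝ} [IsProbabilityMeasure μ] {ξ : ι → Ω → ℝ}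

lemma integral_exp_neg_mul_iSup_abs_le (hξ : iIndepFun ξ P) (hmap : ∀ i, P.map (ξ i) = μ)
    {c L : ℝ} (hc : 0 ≤ c) (hcL : Fintype.card ι * c ≤ L) :
    ∫ ω, exp (-(L * ⨆ i, |ξ i ω|)) ∂P ≤ (∫ x, exp (-(c * |x|)) ∂μ) ^ Fintype.card ι := by
  have hprod : ∫ ω, ∏ i, exp (-(c * |ξ i ω|)) ∂P = (∫ x, exp (-(c * |x|)) ∂μ) ^ Fintype.card ι :=
    hξ.integral_fun_prod_comp_of_map_eq hmap (f := fun x => exp (-(c * |x|))) (by fun_prop)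
  have hint : Integrable (fun ω => ∏ i, exp (-(c * |ξ i ω|))) P := by
    refine .of_bound ?_ 1 (.of_forall fun ω => ?_)
    · have hξm := fun i => aemeasurable_of_map_eq (hmap i)
      fun_prop
    · rw [norm_of_nonneg (by positivity)]
      exact Finset.prod_le_one (fun i _ => by positivity)
        fun i _ => exp_le_one_iff.2 (neg_nonpos.2 (by positivity))
  rw [← hprod]
  exact integral_mono_of_nonneg (.of_forall fun ω => (exp_pos _).le) hint
    (.of_forall fun ω => exp_neg_mul_iSup_abs_le_prod hc hcL _)

lemma exp_neg_mul_measureReal_Icc_pow_le_integral (hξ : iIndepFun ξ P)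
    (hmap : ∀ i, P.map (ξ i) = μ) {a L : ℝ} (ha : 0 ≤ a) (hL : 0 ≤ L) :
    exp (-(L * a)) * μ.real (Set.Icc (-a) a) ^ Fintype.card ι
      ≤ ∫ ω, exp (-(L * ⨆ i, |ξ i ω|)) ∂P := by
  have hint : Integrable (fun ω => exp (-(L * ⨆ i, |ξ i ω|))) P := by
    refine .of_bound ?_ 1 (.of_forall fun ω => ?_)
    · have hmax := AEMeasurable.iSup fun i => (aemeasurable_of_map_eq (hmap i)).abs
      exact (hmax.const_mul L).neg.exp.aestronglyMeasurable
    · rw [norm_of_nonneg (exp_pos _).le, exp_le_one_iff, neg_nonpos]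
      exact mul_nonneg hL (Real.iSup_nonneg fun i => abs_nonneg _)
  have hsub : (⋂ i, ξ i ⁻¹' Set.Icc (-a) a) ⊆
      {ω | exp (-(L * a)) ≤ exp (-(L * ⨆ i, |ξ i ω|))} := by
    intro ω hω
    simp only [Set.mem_iInter, Set.mem_preimage, Set.mem_Icc, ← abs_le] at hω
    simp only [Set.mem_ofPred_eq, exp_le_exp, neg_le_neg_iff]
    gcongr
    exact Real.iSup_le hω ha
  have hprob :
      P.real (⋂ i, ξ i ⁻¹' Set.Icc (-a) a) = μ.real (Set.Icc (-a) a) ^ Fintype.card ι := by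
    simp [measureReal_def, hξ.measure_iInter_preimage_of_map_eq hmap measurableSet_Icc]
  calc exp (-(L * a)) * μ.real (Set.Icc (-a) a) ^ Fintype.card ι
      ≤ exp (-(L * a)) * P.real {ω | exp (-(L * a)) ≤ exp (-(L * ⨆ i, |ξ i ω|))} := by
        rw [← hprob]; exact mul_le_mul_of_nonneg_left (measureReal_mono hsub) (exp_pos _).le
    _ ≤ ∫ ω, exp (-(L * ⨆ i, |ξ i ω|)) ∂P :=
        mul_meas_ge_le_integral_of_nonneg (.of_forall fun ω => (exp_pos _).le) hint _

end ExpMaxAbs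

/-- There exist constants `c̃₃, c̃₄ > 0` such that for i.i.d. standard Gaussians,
all `L > 0` and all integers `N` with `L/2 ≤ N ≤ 2L`:
`c̃₃·L ≤ -log E[exp(-L·max_{1≤i≤N} |ξᵢ|)] ≤ c̃₄·L`. -/
theorem stmt9 :
    ∃ c₃ c₄ : ℝ, 0 < c₃ ∧ 0 < c₄ ∧
      ∀ (Ω : Type) [MeasurableSpace Ω] (P : Measure Ω), IsProbabilityMeasure P →
      ∀ ξ : ℕ → Ω → ℝ,
        iIndepFun ξ P →
        (∀ i, Measure.map (ξ i) P = gaussianReal 0 1) →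
        ∀ (L : ℝ) (N : ℕ), 0 < L → L / 2 ≤ (N : ℝ) → (N : ℝ) ≤ 2 * L →
          c₃ * L ≤ -Real.log (∫ ω, Real.exp (-(L * ⨆ i : Fin N, |ξ i ω|)) ∂P) ∧
          -Real.log (∫ ω, Real.exp (-(L * ⨆ i : Fin N, |ξ i ω|)) ∂P) ≤ c₄ * L := by
  set q := ∫ x, exp (-(1 / 2 * |x|)) ∂gaussianReal 0 1
  set p := (gaussianReal 0 1).real (Set.Icc (-1) 1)
  have hlog_q : log q < 0 :=
    log_neg (integral_exp_pos (integrable_exp_neg_mul_abs (by norm_num)))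
      (integral_exp_neg_mul_abs_lt_one (gaussianReal_compl_singleton_ne_zero one_ne_zero 0)
        (by norm_num))
  have hp : 0 < p := measureReal_gaussianReal_Icc_pos one_ne_zero (by norm_num)
  have hlog_p : log p ≤ 0 := log_nonpos hp.le measureReal_le_one
  refine ⟨-log q / 2, 1 - 2 * log p, by linarith, by linarith, ?_⟩
  intro Ω _ P _ ξ hξ hmap L N hL hLN hNL
  set I := ∫ ω, exp (-(L * ⨆ i : Fin N, |ξ i ω|)) ∂P
  have hξN : iIndepFun (fun i : Fin N => ξ i) P := hξ.precomp Fin.val_injective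
  have hupper : I ≤ q ^ N := by
    have := integral_exp_neg_mul_iSup_abs_le hξN (fun i => hmap i) (c := 1 / 2) (L := L)
      (by norm_num) (by rw [Fintype.card_fin]; linarith)
    rwa [Fintype.card_fin] at this
  have hlower : exp (-L) * p ^ N ≤ I := by
    have := exp_neg_mul_measureReal_Icc_pow_le_integral hξN (fun i => hmap i) zero_le_one hL.le
    rwa [Fintype.card_fin, mul_one] at this
  have hI : 0 < I := lt_of_lt_of_le (by positivity) hlower
  constructor
  · calc -log q / 2 * L ≤ -(N * log q) := by nlinarith
      _ = -log (q ^ N) := by rw [log_pow]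
      _ ≤ -log I := neg_le_neg (log_le_log hI hupper)
  · calc -log I ≤ -log (exp (-L) * p ^ N) := neg_le_neg (log_le_log (by positivity) hlower)
      _ = L - N * log p := by
        rw [log_mul (exp_pos _).ne' (pow_pos hp N).ne', log_exp, log_pow]; ring
      _ ≤ (1 - 2 * log p) * L := by nlinarith
end

section
/- Let V be a positive random variable and θ > 0. Then log E[e^{−λV}] ≍ −λ·(log log λ)^{−θ} as λ → ∞ holds if and only if log log|log P(V ≤ ε)| ≍ ε^{−1/θ} as ε → 0⁺. -/
/-!
With `L(l) = E e^{-lV}`, `F(ε) = P(V ≤ ε)`, `ψ = -log L` and `G = -log F`, splitting the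
expectation at `V = ε` gives `e^{-lε} F(ε) ≤ L(l) ≤ F(ε) + e^{-lε}`, hence
`ψ(l) ≤ lε + G(ε)`, and `ψ(l) ≥ lε - log 2` whenever `lε ≤ G(ε)`.
Each direction pairs `l` with `ε` through `l = exp (exp x)`, `x ≍ ε^{-1/θ}`: then
`l (log log l)^{-θ} = l x^{-θ} ≍ lε`, and the doubly exponential size of `l` in `x` swallows
the factor `x^θ`, the constants and the `log 2`, so that `log log G(ε) ≍ x` and `ψ(l) ≍ lε`.
-/

open MeasureTheory Filter Topology Real

theorem log_log_le_iff {x y : ℝ} (hx : 1 < x) : log (log x) ≤ y ↔ x ≤ exp (exp y) := by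
  rw [log_le_iff_le_exp (log_pos hx), log_le_iff_le_exp (by linarith)]

theorem le_log_log_iff {x y : ℝ} (hx : 1 < x) : y ≤ log (log x) ↔ exp (exp y) ≤ x := by
  rw [le_log_iff_exp_le (log_pos hx), le_log_iff_exp_le (by linarith)]

theorem exp_exp_log_log {l : ℝ} (hl : 1 < l) : exp (exp (log (log l))) = l := by
  rw [exp_log (log_pos hl), exp_log (by linarith)]

theorem tendsto_log_log_atTop : Tendsto (fun x : ℝ => log (log x)) atTop atTop :=
  tendsto_log_atTop.comp tendsto_log_atTop

theorem tendsto_exp_exp_mul_rpow_neg_atTop (θ : ℝ) :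
    Tendsto (fun x : ℝ => exp (exp x) * x ^ (-θ)) atTop atTop := by
  refine tendsto_atTop_mono' atTop ?_ (tendsto_exp_div_rpow_atTop θ)
  filter_upwards [eventually_gt_atTop 0] with x hx
  rw [rpow_neg hx.le, ← div_eq_mul_inv]
  gcongr
  linarith [add_one_le_exp x]

theorem eventually_mul_exp_exp_half_le (K θ : ℝ) :
    ∀ᶠ x : ℝ in atTop, K * exp (exp (x / 2)) ≤ exp (exp x) * x ^ (-θ) := by
  filter_upwards [(tendsto_exp_div_rpow_atTop θ).eventually_ge_atTop 1,
    tendsto_exp_atTop.eventually_ge_atTop |K|, eventually_ge_atTop 6] with x hpow hK hx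
  have hxθ : 0 < x ^ θ := rpow_pos_of_pos (by linarith) θ
  rw [le_div_iff₀ hxθ, one_mul] at hpow
  have hhalf : x / 2 + 1 ≤ exp (x / 2) := by linarith [add_one_le_exp (x / 2)]
  have hsq : exp (x / 2) + 2 * x ≤ exp x := by
    have hsplit : exp x = exp (x / 2) * exp (x / 2) := by rw [← exp_add, add_halves]
    nlinarith
  rw [rpow_neg (by linarith), ← div_eq_mul_inv, le_div_iff₀ hxθ]
  calc K * exp (exp (x / 2)) * x ^ θ ≤ exp x * exp (exp (x / 2)) * exp x := by
        gcongr
        · exact (le_abs_self K).trans hK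
    _ = exp (exp (x / 2) + 2 * x) := by rw [exp_add, two_mul, exp_add]; ring
    _ ≤ exp (exp x) := exp_le_exp.2 hsq

theorem tendsto_const_mul_rpow_neg_div_nhdsGT_zero {k θ : ℝ} (hk : 0 < k) (hθ : 0 < θ) :
    Tendsto (fun ε : ℝ => k * ε ^ (-1 / θ)) (𝓝[>] 0) atTop := by
  have : Tendsto (fun ε : ℝ => (ε⁻¹) ^ θ⁻¹) (𝓝[>] 0) atTop :=
    (tendsto_rpow_atTop (inv_pos.2 hθ)).comp tendsto_inv_nhdsGT_zero
  refine (this.const_mul_atTop hk).congr' ?_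
  filter_upwards [self_mem_nhdsWithin] with ε hε
  rw [inv_rpow (le_of_lt hε), ← rpow_neg (le_of_lt hε), neg_div, one_div]

theorem tendsto_div_rpow_atTop_nhdsGT_zero {k θ : ℝ} (hk : 0 < k) (hθ : 0 < θ) :
    Tendsto (fun x : ℝ => (k / x) ^ θ) atTop (𝓝[>] 0) := by
  refine tendsto_nhdsWithin_iff.2 ⟨?_, ?_⟩
  · simpa [zero_rpow hθ.ne'] using
      ((tendsto_const_nhds (x := k)).div_atTop tendsto_id).rpow_const (Or.inr hθ.le)
  · filter_upwards [eventually_gt_atTop 0] with x hx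
    exact rpow_pos_of_pos (div_pos hk hx) θ

theorem mul_rpow_neg_div_rpow_neg {k ε θ : ℝ} (hk : 0 ≤ k) (hε : 0 < ε) (hθ : θ ≠ 0) :
    (k * ε ^ (-1 / θ)) ^ (-θ) = ε / k ^ θ := by
  rw [mul_rpow hk (rpow_nonneg hε.le _), ← rpow_mul hε.le, rpow_neg hk]
  field_simp
  simp

theorem mul_div_rpow_eq {l k x θ : ℝ} (hk : 0 ≤ k) (hx : 0 < x) :
    l * (k / x) ^ θ = k ^ θ * (l * x ^ (-θ)) := by
  rw [div_rpow hk hx.le, rpow_neg hx.le]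
  ring

theorem div_rpow_rpow_neg_div {k x θ : ℝ} (hk : 0 < k) (hx : 0 < x) (hθ : θ ≠ 0) :
    ((k / x) ^ θ) ^ (-1 / θ) = x / k := by
  rw [← rpow_mul (div_pos hk hx).le, mul_div_cancel₀ _ hθ, rpow_neg_one, inv_div]

theorem exp_neg_mul_le_one {l v : ℝ} (hl : 0 ≤ l) (hv : 0 ≤ v) : exp (-(l * v)) ≤ 1 :=
  exp_le_one_iff.2 (neg_nonpos.2 (mul_nonneg hl hv))

section LaplaceSmallBall

variable {Ω : Type*} [MeasurableSpace Ω]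

noncomputable def negLogLaplace (P : Measure Ω) (V : Ω → ℝ) (l : ℝ) : ℝ :=
  -log (∫ ω, exp (-(l * V ω)) ∂P)

/-- `|log F|` is `-log F` for `F ≤ 1`, except that it is `0` (not `∞`) when `F = 0`. -/
noncomputable def negLogSmallBall (P : Measure Ω) (V : Ω → ℝ) (ε : ℝ) : ℝ :=
  |log (P {ω | V ω ≤ ε}).toReal|

variable (P : Measure Ω) {V : Ω → ℝ} {l ε : ℝ}

theorem tendsto_measure_le_nhdsGT [IsFiniteMeasure P] (hV : Measurable V) (a : ℝ) :
    Tendsto (fun ε => P {ω | V ω ≤ ε}) (𝓝[>] a) (𝓝 (P {ω | V ω ≤ a})) := by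
  have hinter : (⋂ r > a, {ω | V ω ≤ r}) = {ω | V ω ≤ a} := by
    ext ω
    simpa using ⟨le_of_forall_gt_imp_ge_of_dense, fun h r hr => h.trans hr.le⟩
  rw [← hinter]
  exact tendsto_measure_biInter_gt (fun r _ => (hV measurableSet_Iic).nullMeasurableSet)
    (fun i j _ hij ω hω => le_trans hω hij) ⟨a + 1, by simp, measure_ne_top _ _⟩

theorem negLogSmallBall_eq_neg_log [IsProbabilityMeasure P] (V : Ω → ℝ) (ε : ℝ) :
    negLogSmallBall P V ε = -log (P {ω | V ω ≤ ε}).toReal :=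
  abs_of_nonpos (log_nonpos ENNReal.toReal_nonneg measureReal_le_one)

theorem measure_le_toReal_le_exp_neg_negLogSmallBall [IsProbabilityMeasure P] (V : Ω → ℝ)
    (ε : ℝ) : (P {ω | V ω ≤ ε}).toReal ≤ exp (-negLogSmallBall P V ε) := by
  rcases (ENNReal.toReal_nonneg (a := P {ω | V ω ≤ ε})).eq_or_lt with h | h
  · rw [← h]
    exact (exp_pos _).le
  · rw [negLogSmallBall_eq_neg_log P V, neg_neg, exp_log h]

theorem negLogSmallBall_le_of_exp_neg_le [IsProbabilityMeasure P] {s : ℝ}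
    (h : exp (-s) ≤ (P {ω | V ω ≤ ε}).toReal) : negLogSmallBall P V ε ≤ s := by
  rw [negLogSmallBall_eq_neg_log P V, neg_le, ← log_exp (-s)]
  exact log_le_log (exp_pos _) h

section

variable [IsProbabilityMeasure P] (hV : Measurable V) (hV0 : ∀ ω, 0 ≤ V ω) (hl : 0 ≤ l)
include hV hV0 hl

theorem integrable_exp_neg_mul : Integrable (fun ω => exp (-(l * V ω))) P :=
  .of_bound (by fun_prop) 1 (ae_of_all _ fun ω => by
    simpa [abs_of_pos (exp_pos _)] using exp_neg_mul_le_one hl (hV0 ω))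

theorem exp_neg_mul_mul_measure_le_integral (ε : ℝ) :
    exp (-(l * ε)) * (P {ω | V ω ≤ ε}).toReal ≤ ∫ ω, exp (-(l * V ω)) ∂P := by
  have hS : MeasurableSet {ω | V ω ≤ ε} := hV measurableSet_Iic
  calc exp (-(l * ε)) * (P {ω | V ω ≤ ε}).toReal
        = ∫ _ in {ω | V ω ≤ ε}, exp (-(l * ε)) ∂P := by
        rw [setIntegral_const, smul_eq_mul, mul_comm, measureReal_def]
    _ ≤ ∫ ω in {ω | V ω ≤ ε}, exp (-(l * V ω)) ∂P :=
        setIntegral_mono_on (integrable_const _).integrableOn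
          (integrable_exp_neg_mul P hV hV0 hl).integrableOn hS
          fun ω hω => exp_le_exp.2 (neg_le_neg (mul_le_mul_of_nonneg_left hω hl))
    _ ≤ ∫ ω, exp (-(l * V ω)) ∂P :=
        setIntegral_le_integral (integrable_exp_neg_mul P hV hV0 hl)
          (ae_of_all _ fun _ => (exp_pos _).le)

theorem integral_le_measure_add_exp_neg_mul (ε : ℝ) :
    ∫ ω, exp (-(l * V ω)) ∂P ≤ (P {ω | V ω ≤ ε}).toReal + exp (-(l * ε)) := by
  set S := {ω | V ω ≤ ε}
  have hS : MeasurableSet S := hV measurableSet_Iic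
  calc ∫ ω, exp (-(l * V ω)) ∂P ≤ ∫ ω, (S.indicator 1 ω + exp (-(l * ε))) ∂P := by
        refine integral_mono (integrable_exp_neg_mul P hV hV0 hl)
          (((integrable_const 1).indicator hS).add (integrable_const _)) fun ω => ?_
        by_cases hω : ω ∈ S
        · simp only [Set.indicator_of_mem hω, Pi.one_apply]
          linarith [exp_neg_mul_le_one hl (hV0 ω), exp_pos (-(l * ε))]
        · simp only [Set.indicator_of_notMem hω, zero_add]
          exact exp_le_exp.2 (neg_le_neg (mul_le_mul_of_nonneg_left (not_le.1 hω).le hl))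
    _ = (P S).toReal + exp (-(l * ε)) := by
        rw [integral_add ((integrable_const 1).indicator hS) (integrable_const _),
          integral_indicator_one hS, integral_const, probReal_univ, one_smul, measureReal_def]

theorem negLogLaplace_le_add_negLogSmallBall (hF : 0 < (P {ω | V ω ≤ ε}).toReal) :
    negLogLaplace P V l ≤ l * ε + negLogSmallBall P V ε := by
  have h := exp_neg_mul_mul_measure_le_integral P hV hV0 hl ε
  rw [negLogLaplace, negLogSmallBall_eq_neg_log P V, neg_le, neg_add, neg_neg,
    ← log_exp (-(l * ε)), ← log_mul (exp_pos _).ne' hF.ne']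
  exact log_le_log (by positivity) h

theorem sub_log_two_le_negLogLaplace (h : l * ε ≤ negLogSmallBall P V ε) :
    l * ε - log 2 ≤ negLogLaplace P V l := by
  have hF : (P {ω | V ω ≤ ε}).toReal ≤ exp (-(l * ε)) :=
    (measure_le_toReal_le_exp_neg_negLogSmallBall P V ε).trans (exp_le_exp.2 (neg_le_neg h))
  have hL := (integral_le_measure_add_exp_neg_mul P hV hV0 hl ε).trans (add_le_add hF le_rfl)
  rw [negLogLaplace, le_neg, neg_sub, sub_eq_add_neg, ← log_exp (-(l * ε)),
    ← log_mul two_ne_zero (exp_pos _).ne']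
  exact log_le_log (integral_exp_pos (integrable_exp_neg_mul P hV hV0 hl)) (by linarith)

theorem exp_neg_mul_le_measure (h : negLogLaplace P V l ≤ l * ε / 2)
    (hε : 2 * log 2 ≤ l * ε) : exp (-(l * ε)) ≤ (P {ω | V ω ≤ ε}).toReal := by
  have hL := integral_le_measure_add_exp_neg_mul P hV hV0 hl ε
  have hlow : exp (-(l * ε / 2)) ≤ ∫ ω, exp (-(l * V ω)) ∂P := by
    rw [negLogLaplace, neg_le] at h
    simpa [exp_log (integral_exp_pos (integrable_exp_neg_mul P hV hV0 hl))] using exp_le_exp.2 h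
  have hhalf : exp (-(l * ε / 2)) ≤ 1 / 2 := by
    rw [← exp_log (by norm_num : (0:ℝ) < 1 / 2), exp_le_exp, one_div, log_inv]
    linarith
  have hsq : exp (-(l * ε)) = exp (-(l * ε / 2)) * exp (-(l * ε / 2)) := by
    rw [← exp_add]; ring_nf
  nlinarith [exp_pos (-(l * ε / 2))]

end

variable [IsProbabilityMeasure P] (hV : Measurable V) {θ c C : ℝ}
include hV

theorem eventually_negLogSmallBall_le (hθ : 0 < θ) (hV0 : ∀ ω, 0 ≤ V ω) (hC : 0 < C)
    (h : ∀ᶠ l in atTop, negLogLaplace P V l ≤ C * (l * log (log l) ^ (-θ))) :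
    ∀ᶠ ε in 𝓝[>] 0, 0 < (P {ω | V ω ≤ ε}).toReal ∧
      negLogSmallBall P V ε ≤ exp (exp ((2 * C) ^ θ⁻¹ * ε ^ (-1 / θ))) := by
  have hk : 0 < (2 * C) ^ θ⁻¹ := by positivity
  have hx := tendsto_const_mul_rpow_neg_div_nhdsGT_zero hk hθ
  filter_upwards [self_mem_nhdsWithin, Ioo_mem_nhdsGT one_pos,
    (tendsto_exp_atTop.comp (tendsto_exp_atTop.comp hx)).eventually h,
    hx.eventually ((tendsto_exp_exp_mul_rpow_neg_atTop θ).eventually_ge_atTop (log 2 / C))]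
    with ε hε hε1 hψ hρ
  simp only [Function.comp_apply, log_exp] at hψ
  set x := (2 * C) ^ θ⁻¹ * ε ^ (-1 / θ)
  have hxθ : x ^ (-θ) = ε / (2 * C) := by
    rw [mul_rpow_neg_div_rpow_neg hk.le hε hθ.ne', rpow_inv_rpow (by positivity) hθ.ne']
  have hlε : exp (exp x) * ε = 2 * C * (exp (exp x) * x ^ (-θ)) := by
    rw [hxθ]; field_simp
  rw [hxθ] at hψ
  have hF := exp_neg_mul_le_measure P hV hV0 (exp_pos _).le (ε := ε)
    (hψ.trans_eq (by field_simp)) (by rw [hlε]; linarith [(div_le_iff₀' hC).1 hρ])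
  refine ⟨(exp_pos _).trans_le hF, (negLogSmallBall_le_of_exp_neg_le P hF).trans ?_⟩
  exact mul_le_of_le_one_right (exp_pos _).le hε1.2.le

theorem eventually_exp_exp_le_negLogSmallBall (hθ : 0 < θ) (hV0 : ∀ ω, 0 ≤ V ω) (hc : 0 < c)
    (hF : ∀ᶠ ε in 𝓝[>] 0, 0 < (P {ω | V ω ≤ ε}).toReal)
    (h : ∀ᶠ l in atTop, c * (l * log (log l) ^ (-θ)) ≤ negLogLaplace P V l) :
    ∀ᶠ ε in 𝓝[>] 0, exp (exp ((c / 2) ^ θ⁻¹ * ε ^ (-1 / θ) / 2)) ≤ negLogSmallBall P V ε := by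
  have hk : 0 < (c / 2) ^ θ⁻¹ := by positivity
  have hx := tendsto_const_mul_rpow_neg_div_nhdsGT_zero hk hθ
  filter_upwards [self_mem_nhdsWithin, hF,
    (tendsto_exp_atTop.comp (tendsto_exp_atTop.comp hx)).eventually h,
    hx.eventually (eventually_mul_exp_exp_half_le (2 / c) θ)] with ε hε hF hψ hρ
  simp only [Function.comp_apply, log_exp] at hψ
  set x := (c / 2) ^ θ⁻¹ * ε ^ (-1 / θ)
  have hxθ : x ^ (-θ) = ε / (c / 2) := by
    rw [mul_rpow_neg_div_rpow_neg hk.le hε hθ.ne', rpow_inv_rpow (by positivity) hθ.ne']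
  rw [hxθ] at hψ hρ
  have hlε : exp (exp x) * (ε / (c / 2)) = 2 / c * (exp (exp x) * ε) := by field_simp
  rw [hlε, ← mul_assoc, mul_div_cancel₀ _ hc.ne'] at hψ
  rw [hlε] at hρ
  have hG := hψ.trans (negLogLaplace_le_add_negLogSmallBall P hV hV0 (exp_pos _).le hF)
  linarith [le_of_mul_le_mul_left hρ (by positivity)]

theorem eventually_exp_exp_bounds_negLogSmallBall (hVpos : ∀ ω, 0 < V ω) (hc : 0 < c)
    (h : ∀ᶠ ε in 𝓝[>] 0, c * ε ^ (-1 / θ) ≤ log (log (negLogSmallBall P V ε)) ∧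
      log (log (negLogSmallBall P V ε)) ≤ C * ε ^ (-1 / θ)) :
    ∀ᶠ ε in 𝓝[>] 0, 0 < (P {ω | V ω ≤ ε}).toReal ∧
      exp (exp (c * ε ^ (-1 / θ))) ≤ negLogSmallBall P V ε ∧
      negLogSmallBall P V ε ≤ exp (exp (C * ε ^ (-1 / θ))) := by
  have hF0 : Tendsto (fun ε => (P {ω | V ω ≤ ε}).toReal) (𝓝[>] 0) (𝓝 0) := by
    have hempty : {ω | V ω ≤ 0} = ∅ := Set.eq_empty_of_forall_notMem fun ω => (hVpos ω).not_ge
    have h := (ENNReal.tendsto_toReal (measure_ne_top P _)).comp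
      (tendsto_measure_le_nhdsGT P hV 0)
    rwa [hempty, measure_empty, ENNReal.toReal_zero] at h
  -- `log (log G)` is also large for tiny `G`; `F(ε) → 0` excludes that and forces `G > 1`.
  filter_upwards [h, self_mem_nhdsWithin, hF0.eventually_lt_const (exp_pos (-1))]
    with ε ⟨hlow, hup⟩ hε hFsmall
  have hpos : 0 < log (log (negLogSmallBall P V ε)) :=
    (mul_pos hc (rpow_pos_of_pos hε _)).trans_le hlow
  have hF : 0 < (P {ω | V ω ≤ ε}).toReal := by
    refine ENNReal.toReal_nonneg.lt_of_ne fun hF => hpos.ne' ?_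
    simp [negLogSmallBall, ← hF]
  have hG : 1 < negLogSmallBall P V ε := by
    rw [negLogSmallBall_eq_neg_log, lt_neg, ← log_exp (-1)]
    exact log_lt_log hF hFsmall
  exact ⟨hF, (le_log_log_iff hG).1 hlow, (log_log_le_iff hG).1 hup⟩

theorem eventually_le_negLogLaplace (hθ : 0 < θ) (hV0 : ∀ ω, 0 ≤ V ω) (hc : 0 < c)
    (h : ∀ᶠ ε in 𝓝[>] 0, exp (exp (c * ε ^ (-1 / θ))) ≤ negLogSmallBall P V ε) :
    ∀ᶠ l in atTop, (c / 2) ^ θ / 2 * (l * log (log l) ^ (-θ)) ≤ negLogLaplace P V l := by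
  have hk : 0 < c / 2 := by positivity
  have hε := (tendsto_div_rpow_atTop_nhdsGT_zero hk hθ).comp tendsto_log_log_atTop
  have hA := ((tendsto_exp_exp_mul_rpow_neg_atTop θ).comp
    tendsto_log_log_atTop).eventually_ge_atTop (2 * log 2 / (c / 2) ^ θ)
  filter_upwards [hε.eventually h, hε.eventually (Ioo_mem_nhdsGT one_pos), hA,
    eventually_gt_atTop 1, tendsto_log_log_atTop.eventually_gt_atTop 0] with l hG hε1 hA hl hx
  simp only [Function.comp_apply, exp_exp_log_log hl] at hG hε1 hA
  set x := log (log l)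
  rw [div_rpow_rpow_neg_div hk hx hθ.ne', show c * (x / (c / 2)) = 2 * x by field_simp] at hG
  have hlε : l * (c / 2 / x) ^ θ ≤ negLogSmallBall P V ((c / 2 / x) ^ θ) :=
    calc l * (c / 2 / x) ^ θ ≤ exp (exp x) := by
          rw [exp_exp_log_log hl]; exact mul_le_of_le_one_right (by linarith) hε1.2.le
      _ ≤ exp (exp (2 * x)) := by gcongr; linarith
      _ ≤ _ := hG
  have hψ := sub_log_two_le_negLogLaplace P hV hV0 (by linarith) hlε
  rw [mul_div_rpow_eq hk.le hx] at hψ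
  rw [div_le_iff₀ (by positivity)] at hA
  nlinarith

theorem eventually_negLogLaplace_le (hθ : 0 < θ) (hV0 : ∀ ω, 0 ≤ V ω) (hC : 0 < C)
    (h : ∀ᶠ ε in 𝓝[>] 0, 0 < (P {ω | V ω ≤ ε}).toReal ∧
      negLogSmallBall P V ε ≤ exp (exp (C * ε ^ (-1 / θ)))) :
    ∀ᶠ l in atTop, negLogLaplace P V l ≤ ((2 * C) ^ θ + 1) * (l * log (log l) ^ (-θ)) := by
  have hk : 0 < 2 * C := by positivity
  have hε := (tendsto_div_rpow_atTop_nhdsGT_zero hk hθ).comp tendsto_log_log_atTop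
  filter_upwards [hε.eventually h,
    tendsto_log_log_atTop.eventually (eventually_mul_exp_exp_half_le 1 θ), eventually_gt_atTop 1,
    tendsto_log_log_atTop.eventually_gt_atTop 0] with l ⟨hF, hG⟩ hρ hl hx
  simp only [Function.comp_apply] at hF hG hρ
  rw [one_mul, exp_exp_log_log hl] at hρ
  set x := log (log l)
  rw [div_rpow_rpow_neg_div hk hx hθ.ne', show C * (x / (2 * C)) = x / 2 by field_simp] at hG
  have hψ := negLogLaplace_le_add_negLogSmallBall P hV hV0 (l := l) (by linarith) hF
  rw [mul_div_rpow_eq hk.le hx] at hψ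
  nlinarith

theorem negLogSmallBall_bounds_of_negLogLaplace_bounds (hθ : 0 < θ) (hV0 : ∀ ω, 0 ≤ V ω)
    (hc : 0 < c) (hcC : c ≤ C)
    (h : ∀ᶠ l in atTop, c * (l * log (log l) ^ (-θ)) ≤ negLogLaplace P V l ∧
      negLogLaplace P V l ≤ C * (l * log (log l) ^ (-θ))) :
    ∃ c' C' : ℝ, 0 < c' ∧ c' ≤ C' ∧ ∀ᶠ ε in 𝓝[>] 0,
      c' * ε ^ (-1 / θ) ≤ log (log (negLogSmallBall P V ε)) ∧
      log (log (negLogSmallBall P V ε)) ≤ C' * ε ^ (-1 / θ) := by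
  have hup := eventually_negLogSmallBall_le P hV hθ hV0 (hc.trans_le hcC)
    (h.mono fun _ => And.right)
  have hlow := eventually_exp_exp_le_negLogSmallBall P hV hθ hV0 hc (hup.mono fun _ => And.left)
    (h.mono fun _ => And.left)
  refine ⟨(c / 2) ^ θ⁻¹ / 2, (2 * C) ^ θ⁻¹, by positivity, ?_, ?_⟩
  · calc (c / 2) ^ θ⁻¹ / 2 ≤ (c / 2) ^ θ⁻¹ := half_le_self (by positivity)
      _ ≤ (2 * C) ^ θ⁻¹ := by gcongr; linarith
  · filter_upwards [hup, hlow] with ε ⟨_, hG⟩ hG'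
    have hG1 : 1 < negLogSmallBall P V ε := (one_lt_exp_iff.2 (exp_pos _)).trans_le hG'
    rw [le_log_log_iff hG1, log_log_le_iff hG1, div_mul_eq_mul_div]
    exact ⟨hG', hG⟩

theorem negLogLaplace_bounds_of_negLogSmallBall_bounds (hθ : 0 < θ) (hVpos : ∀ ω, 0 < V ω)
    (hc : 0 < c) (hcC : c ≤ C)
    (h : ∀ᶠ ε in 𝓝[>] 0, c * ε ^ (-1 / θ) ≤ log (log (negLogSmallBall P V ε)) ∧
      log (log (negLogSmallBall P V ε)) ≤ C * ε ^ (-1 / θ)) :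
    ∃ c' C' : ℝ, 0 < c' ∧ c' ≤ C' ∧ ∀ᶠ l in atTop,
      c' * (l * log (log l) ^ (-θ)) ≤ negLogLaplace P V l ∧
      negLogLaplace P V l ≤ C' * (l * log (log l) ^ (-θ)) := by
  have hV0 : ∀ ω, 0 ≤ V ω := fun ω => (hVpos ω).le
  have hG := eventually_exp_exp_bounds_negLogSmallBall P hV hVpos hc h
  refine ⟨(c / 2) ^ θ / 2, (2 * C) ^ θ + 1, by positivity, ?_, ?_⟩
  · calc (c / 2) ^ θ / 2 ≤ (c / 2) ^ θ := half_le_self (by positivity)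
      _ ≤ (2 * C) ^ θ := by gcongr; linarith
      _ ≤ (2 * C) ^ θ + 1 := le_add_of_nonneg_right zero_le_one
  · exact (eventually_le_negLogLaplace P hV hθ hV0 hc (hG.mono fun _ h => h.2.1)).and
      (eventually_negLogLaplace_le P hV hθ hV0 (hc.trans_le hcC)
        (hG.mono fun _ h => ⟨h.1, h.2.2⟩))

end LaplaceSmallBall

/-- Tauberian equivalence: for a positive random variable `V` and `θ > 0`,
`-log E[e^(-λV)] ≍ λ (log log λ)^(-θ)` as `λ → ∞` if and only if
`log log|log P(V ≤ ε)| ≍ ε^(-1/θ)` as `ε → 0⁺`. -/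
theorem stmt14 (Ω : Type) [MeasurableSpace Ω] (P : Measure Ω) [IsProbabilityMeasure P]
    (V : Ω → ℝ) (hV : Measurable V) (hVpos : ∀ ω, 0 < V ω)
    (θ : ℝ) (hθ : 0 < θ) :
    (∃ c C : ℝ, 0 < c ∧ c ≤ C ∧
      ∀ᶠ l in atTop,
        c * (l * Real.log (Real.log l) ^ (-θ)) ≤
          -Real.log (∫ ω, Real.exp (-(l * V ω)) ∂P) ∧
        -Real.log (∫ ω, Real.exp (-(l * V ω)) ∂P) ≤
          C * (l * Real.log (Real.log l) ^ (-θ))) ↔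
    (∃ c C : ℝ, 0 < c ∧ c ≤ C ∧
      ∀ᶠ ε in nhdsWithin (0 : ℝ) (Set.Ioi 0),
        c * ε ^ (-1 / θ) ≤
          Real.log (Real.log |Real.log ((P {ω | V ω ≤ ε}).toReal)|) ∧
        Real.log (Real.log |Real.log ((P {ω | V ω ≤ ε}).toReal)|) ≤
          C * ε ^ (-1 / θ)) :=
  ⟨fun ⟨_, _, hc, hcC, h⟩ =>
    negLogSmallBall_bounds_of_negLogLaplace_bounds P hV hθ (fun ω => (hVpos ω).le) hc hcC h,
   fun ⟨_, _, hc, hcC, h⟩ =>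
    negLogLaplace_bounds_of_negLogSmallBall_bounds P hV hθ hVpos hc hcC h⟩
end
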